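/- arXiv:2507.07580 — 2 statements merged into one kernel-verified Lean document; each statement's English description precedes it below -/
import Mathlib

section
/- Let W be an m×n real matrix, X an n×k real matrix, and let R be any n×n matrix with RᵀR = XXᵀ (e.g., the upper-triangular factor from a QR decomposition of Xᵀ when n ≤ k). Then for every m×n matrix W', ‖(W − W')X‖_F = ‖(W − W')Rᵀ‖_F. Consequently, a rank-r minimizer of ‖(W−W')X‖_F is given by W' = U_r U_rᵀ W, where U_r consists of the first r left singular vectors of WRᵀ. -/
open Matrix BigOperators

noncomputable def frobNorm {α β : Type*} [Fintype α] [Fintype β]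
    (A : Matrix α β ℝ) : ℝ :=
  Real.sqrt (∑ i, ∑ j, (A i j) ^ 2)

/-!
Since `RᵀR = XXᵀ`, the matrices `MX` and `MRᵀ` have the same Gram matrix `MXXᵀMᵀ`, hence the
same Frobenius norm; so everything reduces to approximating `A = WRᵀ` by matrices of rank `≤ r`.
If `B` has rank `≤ r`, choose `C` with orthonormal columns spanning a space that contains the
columns of `B`. Projecting onto that space only brings `A - B` closer to zero, so
`‖A - B‖² ≥ ‖A - CCᵀA‖² = ‖A‖² - tr(Cᵀ AAᵀ C)`. Writing `AAᵀ = U diag(s²) Uᵀ`, the trace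
`tr(Cᵀ AAᵀ C) = ∑ᵢ qᵢ sᵢ²` has weights `qᵢ ∈ [0, 1]` of total mass `≤ r`, so it is at most
`s₀² + ⋯ + s_{r-1}²` (Ky Fan), and `C = U_r` attains this bound.
-/

open Finset Module

theorem trace_mul_transpose_eq_sum_sq {ι κ : Type*} [Fintype ι] [Fintype κ]
    (A : Matrix ι κ ℝ) : (A * Aᵀ).trace = ∑ i, ∑ j, A i j ^ 2 := by
  simp [trace, mul_apply, sq]

theorem trace_mul_transpose_nonneg {ι κ : Type*} [Fintype ι] [Fintype κ]
    (A : Matrix ι κ ℝ) : 0 ≤ (A * Aᵀ).trace := by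
  rw [trace_mul_transpose_eq_sum_sq]
  positivity

theorem frobNorm_eq_sqrt_trace {ι κ : Type*} [Fintype ι] [Fintype κ] (A : Matrix ι κ ℝ) :
    frobNorm A = √(A * Aᵀ).trace := by
  rw [frobNorm, trace_mul_transpose_eq_sum_sq]

theorem frobNorm_mul_eq_of_mul_transpose_eq {ι κ κ' μ : Type*} [Fintype ι] [Fintype κ]
    [Fintype κ'] [Fintype μ] {X : Matrix κ μ ℝ} {Y : Matrix κ κ' ℝ} (h : X * Xᵀ = Y * Yᵀ)
    (A : Matrix ι κ ℝ) : frobNorm (A * X) = frobNorm (A * Y) := by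
  rw [frobNorm_eq_sqrt_trace, frobNorm_eq_sqrt_trace, transpose_mul, transpose_mul,
    Matrix.mul_assoc, ← Matrix.mul_assoc X, h, Matrix.mul_assoc Y, ← Matrix.mul_assoc A]

section Isometry

variable {ι κ δ : Type*} [Fintype ι] [Fintype κ] [Fintype δ] [DecidableEq ι] [DecidableEq δ]
  {C : Matrix ι δ ℝ}

theorem trace_sub_proj_mul_transpose (hC : Cᵀ * C = 1) (A : Matrix ι κ ℝ) :
    ((A - C * Cᵀ * A) * (A - C * Cᵀ * A)ᵀ).trace
      = (A * Aᵀ).trace - (Cᵀ * (A * Aᵀ) * C).trace := by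
  have hPt : (1 - C * Cᵀ)ᵀ = 1 - C * Cᵀ := by simp [transpose_sub]
  have hPP : (1 - C * Cᵀ) * (1 - C * Cᵀ) = 1 - C * Cᵀ := by
    rw [mul_sub, mul_one, sub_mul, one_mul, Matrix.mul_assoc, ← Matrix.mul_assoc Cᵀ, hC,
      Matrix.one_mul, sub_self, sub_zero]
  set P := 1 - C * Cᵀ
  calc ((A - C * Cᵀ * A) * (A - C * Cᵀ * A)ᵀ).trace = (P * (A * Aᵀ) * P).trace := by
        rw [show A - C * Cᵀ * A = P * A by rw [Matrix.sub_mul, Matrix.one_mul], transpose_mul,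
          hPt, Matrix.mul_assoc, Matrix.mul_assoc, Matrix.mul_assoc]
    _ = (P * P * (A * Aᵀ)).trace := trace_mul_cycle _ _ _
    _ = (A * Aᵀ).trace - (Cᵀ * (A * Aᵀ) * C).trace := by
        rw [hPP, sub_mul, one_mul, trace_sub, trace_mul_cycle Cᵀ]

theorem trace_sub_proj_mul_transpose_le (hC : Cᵀ * C = 1) (A : Matrix ι κ ℝ)
    {B : Matrix ι κ ℝ} (hB : C * Cᵀ * B = B) :
    ((A - C * Cᵀ * A) * (A - C * Cᵀ * A)ᵀ).trace ≤ ((A - B) * (A - B)ᵀ).trace := by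
  have hsplit : A - C * Cᵀ * A = (A - B) - C * Cᵀ * (A - B) := by
    rw [Matrix.mul_sub, hB]; abel
  rw [hsplit, trace_sub_proj_mul_transpose hC]
  refine sub_le_self _ ?_
  simpa [transpose_mul, Matrix.mul_assoc] using trace_mul_transpose_nonneg (Cᵀ * (A - B))

end Isometry

theorem exists_isometry_mul_transpose_mul_eq {ι κ : Type*} [Fintype ι] [Fintype κ]
    (B : Matrix ι κ ℝ) :
    ∃ C : Matrix ι (Fin B.rank) ℝ, Cᵀ * C = 1 ∧ C * Cᵀ * B = B := by
  let K : Submodule ℝ (EuclideanSpace ℝ ι) := (Submodule.span ℝ (Set.range Bᵀ)).map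
    ((WithLp.linearEquiv 2 ℝ (ι → ℝ)).symm : (ι → ℝ) →ₗ[ℝ] EuclideanSpace ℝ ι)
  have hK : finrank ℝ K = B.rank := by
    rw [rank_eq_finrank_span_cols]
    exact LinearEquiv.finrank_map_eq _ _
  let b := (stdOrthonormalBasis ℝ K).reindex (finCongr hK)
  have hcol : ∀ l, WithLp.toLp 2 (Bᵀ l) ∈ K := fun l =>
    Submodule.mem_map_of_mem (Submodule.subset_span (Set.mem_range_self l))
  refine ⟨of fun i j => (b j : EuclideanSpace ℝ ι) i, ?_, ?_⟩
  · ext j j'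
    have := b.inner_eq_ite j j'
    rw [Submodule.coe_inner, EuclideanSpace.inner_eq_star_dotProduct] at this
    simpa [mul_apply, one_apply, dotProduct, mul_comm] using this
  · ext i l
    have hrepr := congr_arg (fun y : K => (y : EuclideanSpace ℝ ι) i) (b.sum_repr' ⟨_, hcol l⟩)
    simp only [Submodule.coe_inner, EuclideanSpace.inner_eq_star_dotProduct,
      transpose_apply] at hrepr
    rw [← hrepr]
    simp [mul_apply, dotProduct, Finset.mul_sum, mul_comm, mul_left_comm]
    exact Finset.sum_comm

theorem Finset.sum_mul_le_sum_of_threshold {ι : Type*} [Fintype ι] (S : Finset ι)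
    {q a : ι → ℝ} {t : ℝ} (ht : 0 ≤ t) (hq₀ : ∀ i, 0 ≤ q i) (hq₁ : ∀ i, q i ≤ 1)
    (hq : ∑ i, q i ≤ #S) (haS : ∀ i ∈ S, t ≤ a i) (haSc : ∀ i ∉ S, a i ≤ t) :
    ∑ i, q i * a i ≤ ∑ i ∈ S, a i := by
  classical
  have pointwise : ∀ i, q i * a i - (if i ∈ S then a i else 0)
      ≤ t * (q i - if i ∈ S then 1 else 0) := by
    intro i
    split_ifs with hi
    · nlinarith [haS i hi, hq₁ i]
    · nlinarith [haSc i hi, hq₀ i]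
  have hsum := Finset.sum_le_sum fun i (_ : i ∈ univ) => pointwise i
  simp only [Finset.sum_sub_distrib, ← Finset.mul_sum, Finset.sum_ite_mem, univ_inter,
    Finset.sum_const, nsmul_eq_mul, mul_one] at hsum
  nlinarith

theorem diag_mul_transpose_le_one {ι κ : Type*} [Fintype ι] [Fintype κ] [DecidableEq κ]
    {V : Matrix ι κ ℝ} (hV : Vᵀ * V = 1) (i : ι) : (V * Vᵀ) i i ≤ 1 := by
  set Q := V * Vᵀ
  have hQQ : Q * Q = Q := by rw [Matrix.mul_assoc, ← Matrix.mul_assoc Vᵀ, hV, Matrix.one_mul]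
  have hQt : ∀ j, Q j i = Q i j := fun j => by
    rw [← transpose_apply Q, transpose_mul, transpose_transpose]
  have hdiag : Q i i = ∑ j, Q i j ^ 2 := by
    conv_lhs => rw [← hQQ]
    simp only [mul_apply (M := Q), hQt, sq]
  have hsq : Q i i ^ 2 ≤ Q i i := by
    conv_rhs => rw [hdiag]
    exact single_le_sum (fun j _ => sq_nonneg (Q i j)) (mem_univ i)
  nlinarith

theorem trace_transpose_mul_diagonal_mul_le {ι κ : Type*} [Fintype ι] [Fintype κ]
    [DecidableEq ι] [DecidableEq κ] {V : Matrix ι κ ℝ} (hV : Vᵀ * V = 1) (S : Finset ι)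
    (hS : Fintype.card κ ≤ #S) {a : ι → ℝ} {t : ℝ} (ht : 0 ≤ t) (haS : ∀ i ∈ S, t ≤ a i)
    (haSc : ∀ i ∉ S, a i ≤ t) :
    (Vᵀ * diagonal a * V).trace ≤ ∑ i ∈ S, a i := by
  have htrace : (Vᵀ * diagonal a * V).trace = ∑ i, (V * Vᵀ) i i * a i := by
    rw [trace_mul_cycle]
    simp [trace, mul_diagonal]
  have hsum : ∑ i, (V * Vᵀ) i i ≤ #S := by
    rw [show ∑ i, (V * Vᵀ) i i = (V * Vᵀ).trace from rfl, trace_mul_comm, hV, trace_one]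
    exact_mod_cast hS
  rw [htrace]
  refine S.sum_mul_le_sum_of_threshold ht (fun i => ?_) (diag_mul_transpose_le_one hV) hsum
    haS haSc
  simpa [mul_apply] using sum_nonneg fun j (_ : j ∈ univ) => mul_self_nonneg (V i j)

theorem trace_transpose_mul_conj_diagonal_mul_le {ι κ : Type*} [Fintype ι] [Fintype κ]
    [DecidableEq ι] [DecidableEq κ] {U : Matrix ι ι ℝ} (hU : Uᵀ * U = 1) {C : Matrix ι κ ℝ}
    (hC : Cᵀ * C = 1) (S : Finset ι) (hS : Fintype.card κ ≤ #S) {a : ι → ℝ} {t : ℝ}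
    (ht : 0 ≤ t) (haS : ∀ i ∈ S, t ≤ a i) (haSc : ∀ i ∉ S, a i ≤ t) :
    (Cᵀ * (U * diagonal a * Uᵀ) * C).trace ≤ ∑ i ∈ S, a i := by
  have hUUt : U * Uᵀ = 1 := mul_eq_one_comm.mp hU
  have hV : (Uᵀ * C)ᵀ * (Uᵀ * C) = 1 := by
    rw [transpose_mul, transpose_transpose, Matrix.mul_assoc, ← Matrix.mul_assoc U, hUUt,
      Matrix.one_mul, hC]
  have hconj : Cᵀ * (U * diagonal a * Uᵀ) * C = (Uᵀ * C)ᵀ * diagonal a * (Uᵀ * C) := by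
    simp only [transpose_mul, transpose_transpose, Matrix.mul_assoc]
  rw [hconj]
  exact trace_transpose_mul_diagonal_mul_le hV S hS ht haS haSc

theorem trace_submatrix_transpose_mul_conj_diagonal_mul {ι κ : Type*} [Fintype ι] [Fintype κ]
    [DecidableEq ι] {U : Matrix ι ι ℝ} (hU : Uᵀ * U = 1) (a : ι → ℝ) (f : κ → ι) :
    ((U.submatrix id f)ᵀ * (U * diagonal a * Uᵀ) * U.submatrix id f).trace = ∑ j, a (f j) := by
  have hD : Uᵀ * (U * diagonal a * Uᵀ) * U = diagonal a := by
    rw [← Matrix.mul_assoc, ← Matrix.mul_assoc, hU, Matrix.one_mul, Matrix.mul_assoc, hU,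
      Matrix.mul_one]
  have : (U.submatrix id f)ᵀ * (U * diagonal a * Uᵀ) * U.submatrix id f
      = (diagonal a).submatrix f f := by
    conv_rhs => rw [← hD]
    rw [submatrix_mul _ _ _ id _ Function.bijective_id,
      submatrix_mul _ _ _ id _ Function.bijective_id, submatrix_id_id, transpose_submatrix]
  rw [this]
  simp [trace]

theorem transpose_submatrix_mul_submatrix_eq_one {ι κ : Type*} [Fintype ι] [DecidableEq ι]
    [DecidableEq κ] {U : Matrix ι ι ℝ} (hU : Uᵀ * U = 1) {f : κ → ι}
    (hf : Function.Injective f) : (U.submatrix id f)ᵀ * U.submatrix id f = 1 := by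
  rw [transpose_submatrix, ← submatrix_mul _ _ _ _ _ Function.bijective_id, hU, submatrix_one _ hf]

theorem Fin.mem_map_castLEEmb_univ {m r : ℕ} (hr : r ≤ m) (i : Fin m) :
    i ∈ univ.map (Fin.castLEEmb hr) ↔ (i : ℕ) < r := by
  simp only [mem_map, mem_univ, true_and]
  constructor
  · rintro ⟨j, rfl⟩
    exact j.isLt
  · exact fun hi => ⟨⟨i, hi⟩, rfl⟩

theorem exists_threshold_castLE {m r : ℕ} (hr : r ≤ m) {a : Fin m → ℝ} (ha : Antitone a)
    (ha₀ : ∀ i, 0 ≤ a i) : ∃ t, 0 ≤ t ∧ (∀ i ∈ univ.map (Fin.castLEEmb hr), t ≤ a i) ∧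
      ∀ i ∉ univ.map (Fin.castLEEmb hr), a i ≤ t := by
  simp only [Fin.mem_map_castLEEmb_univ, not_lt]
  rcases hr.lt_or_eq with hrm | rfl
  · exact ⟨a ⟨r, hrm⟩, ha₀ _, fun i hi => ha (Fin.mk_le_mk.mpr hi.le), fun i hi => ha hi⟩
  · exact ⟨0, le_rfl, fun i _ => ha₀ i, fun i hi => absurd i.isLt (not_lt.mpr hi)⟩

theorem eckart_young_trace_le {m r : ℕ} {κ : Type*} [Fintype κ] (hr : r ≤ m)
    {A B : Matrix (Fin m) κ ℝ} {U : Matrix (Fin m) (Fin m) ℝ} {a : Fin m → ℝ} (hU : Uᵀ * U = 1)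
    (hA : A * Aᵀ = U * diagonal a * Uᵀ) (ha : Antitone a) (ha₀ : ∀ i, 0 ≤ a i)
    (hB : B.rank ≤ r) :
    ((A - U.submatrix id (Fin.castLE hr) * (U.submatrix id (Fin.castLE hr))ᵀ * A) *
        (A - U.submatrix id (Fin.castLE hr) * (U.submatrix id (Fin.castLE hr))ᵀ * A)ᵀ).trace
      ≤ ((A - B) * (A - B)ᵀ).trace := by
  set Ur := U.submatrix id (Fin.castLE hr)
  set S := univ.map (Fin.castLEEmb hr)
  obtain ⟨C, hC, hCB⟩ := exists_isometry_mul_transpose_mul_eq B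
  obtain ⟨t, ht, haS, haSc⟩ := exists_threshold_castLE hr ha ha₀
  have hUr_trace : (Urᵀ * (A * Aᵀ) * Ur).trace = ∑ i ∈ S, a i := by
    rw [hA, trace_submatrix_transpose_mul_conj_diagonal_mul hU, sum_map]
    rfl
  have hC_trace : (Cᵀ * (A * Aᵀ) * C).trace ≤ ∑ i ∈ S, a i := by
    rw [hA]
    exact trace_transpose_mul_conj_diagonal_mul_le hU hC S (by simpa [S] using hB) ht haS haSc
  calc ((A - Ur * Urᵀ * A) * (A - Ur * Urᵀ * A)ᵀ).trace
      = (A * Aᵀ).trace - (Urᵀ * (A * Aᵀ) * Ur).trace :=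
        trace_sub_proj_mul_transpose
          (transpose_submatrix_mul_submatrix_eq_one hU (Fin.castLE_injective hr)) A
    _ ≤ (A * Aᵀ).trace - (Cᵀ * (A * Aᵀ) * C).trace := by linarith
    _ = ((A - C * Cᵀ * A) * (A - C * Cᵀ * A)ᵀ).trace := (trace_sub_proj_mul_transpose hC A).symm
    _ ≤ ((A - B) * (A - B)ᵀ).trace := trace_sub_proj_mul_transpose_le hC A hCB

/-- If `RᵀR = XXᵀ` then `‖(W−W')X‖_F = ‖(W−W')Rᵀ‖_F` for every `W'`,
and `W' = U_r U_rᵀ W` (with `U_r` the first `r` left singular vectors of `WRᵀ`)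
is a rank-`≤ r` minimizer of `‖(W−W')X‖_F`. -/
theorem stmt1 {m n k : ℕ} (r : ℕ) (hr : r ≤ m)
    (W : Matrix (Fin m) (Fin n) ℝ) (X : Matrix (Fin n) (Fin k) ℝ)
    (R : Matrix (Fin n) (Fin n) ℝ) (hR : Rᵀ * R = X * Xᵀ)
    (U : Matrix (Fin m) (Fin m) ℝ) (s : Fin m → ℝ)
    (hU : Uᵀ * U = 1)
    (hsvd : (W * Rᵀ) * (W * Rᵀ)ᵀ = U * Matrix.diagonal (fun i => (s i) ^ 2) * Uᵀ)
    (hmono : Antitone s) (hpos : ∀ i, 0 ≤ s i)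
    (Ur : Matrix (Fin m) (Fin r) ℝ)
    (hUr : Ur = U.submatrix id (Fin.castLE hr)) :
    (∀ W' : Matrix (Fin m) (Fin n) ℝ,
        frobNorm ((W - W') * X) = frobNorm ((W - W') * Rᵀ)) ∧
    (Ur * Urᵀ * W).rank ≤ r ∧
      ∀ W' : Matrix (Fin m) (Fin n) ℝ, W'.rank ≤ r →
        frobNorm ((W - Ur * Urᵀ * W) * X) ≤ frobNorm ((W - W') * X) := by
  have hnorm : ∀ A : Matrix (Fin m) (Fin n) ℝ, frobNorm (A * X) = frobNorm (A * Rᵀ) :=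
    frobNorm_mul_eq_of_mul_transpose_eq (by rw [transpose_transpose, hR])
  refine ⟨fun W' => hnorm (W - W'), ?_, fun W' hW' => ?_⟩
  · rw [Matrix.mul_assoc]
    exact (rank_mul_le_left _ _).trans (rank_le_width Ur)
  have hproj_sub : (W - Ur * Urᵀ * W) * Rᵀ = W * Rᵀ - Ur * Urᵀ * (W * Rᵀ) := by
    rw [Matrix.sub_mul, Matrix.mul_assoc]
  rw [hnorm, hnorm, frobNorm_eq_sqrt_trace, frobNorm_eq_sqrt_trace, hproj_sub,
    Matrix.sub_mul W W', hUr]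
  exact Real.sqrt_le_sqrt <| eckart_young_trace_le hr hU hsvd
    (fun i j hij => pow_le_pow_left₀ (hpos j) (hmono hij) 2) (fun i => sq_nonneg (s i))
    ((rank_mul_le_left W' Rᵀ).trans hW')
end

section
/- Let W ∈ ℝ^{m×n} and X ∈ ℝ^{n×k}, and let α ≥ 0 be an integer. Let S be a symmetric positive semidefinite matrix with S² = (XXᵀ)^α. Then tr((W − W')(XXᵀ)^α(W − W')ᵀ) = ‖(W − W')S‖_F² for every W' ∈ ℝ^{m×n}; consequently a minimizer of the left-hand side over matrices W' of rank at most r is W' = U_r U_rᵀ W, where U_r consists of the first r left singular vectors of WS. -/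
/-!
Since `S` is symmetric with `S² = (XXᵀ)^α`, we have `A (XXᵀ)^α Aᵀ = (AS)(AS)ᵀ`, so the objective
is `‖(W - W')S‖_F²` and the minimisation is the Eckart–Young problem for `B = WS`.
If `C = W'S` has rank at most `r` and `Q` is the orthogonal projection onto its column space,
then `‖B - C‖² ≥ ‖(1 - Q)B‖² = tr(BBᵀ) - tr(QBBᵀ)`. With `BBᵀ = U diag(s²) Uᵀ`,
`tr(QBBᵀ) = ∑ sᵢ² tᵢ` where `tᵢ` is the diagonal of the projection `UᵀQU`; hence `0 ≤ tᵢ ≤ 1` and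
`∑ tᵢ = rank C ≤ r`, which, `s` being decreasing, bounds `tr(QBBᵀ)` by
`∑_{i<r} sᵢ² = tr(U_r U_rᵀ BBᵀ)`.
-/

open Matrix BigOperators

open WithLp Finset
open scoped MatrixOrder

theorem Fin.sum_castLE_eq_sum_mul_ite {m r : ℕ} (hr : r ≤ m) (f : Fin m → ℝ) :
    ∑ j : Fin r, f (Fin.castLE hr j) = ∑ i, f i * if (i : ℕ) < r then 1 else 0 := by
  simp only [mul_ite, mul_one, mul_zero, ← Finset.sum_filter]
  rw [← Finset.sum_image (s := univ) fun _ _ _ _ h => Fin.castLE_injective hr h]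
  congr 1
  ext i
  simp only [mem_image, mem_univ, true_and, mem_filter]
  exact ⟨fun ⟨j, hj⟩ => hj ▸ j.2, fun h => ⟨⟨i, h⟩, rfl⟩⟩

theorem Antitone.sum_mul_le_sum_castLE {m r : ℕ} (hr : r ≤ m) {d t : Fin m → ℝ}
    (hd : Antitone d) (hd0 : ∀ i, 0 ≤ d i) (ht : ∀ i, t i ∈ Set.Icc (0 : ℝ) 1)
    (hsum : ∑ i, t i ≤ r) :
    ∑ i, d i * t i ≤ ∑ j : Fin r, d (Fin.castLE hr j) := by
  set u : Fin m → ℝ := fun i => if (i : ℕ) < r then 1 else 0 with hu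
  have hu_sum : ∑ i, u i = r := by
    simp [hu, Finset.sum_boole, Fin.card_filter_val_lt, hr]
  -- the threshold `c = d r` makes every `(d i - c) * (t i - u i)` nonpositive
  set c : ℝ := if h : r < m then d ⟨r, h⟩ else 0 with hc
  have hc0 : 0 ≤ c := by
    rw [hc]; split
    · exact hd0 _
    · exact le_rfl
  have key : ∀ i, d i * t i - d i * u i ≤ c * (t i - u i) := by
    intro i
    by_cases hi : (i : ℕ) < r
    · have hci : c ≤ d i := by
        rw [hc]; split
        · exact hd (Fin.mk_le_mk.mpr hi.le)
        · exact hd0 i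
      simp only [hu, if_pos hi]
      nlinarith [(ht i).2]
    · have hrm : r < m := (not_lt.mp hi).trans_lt i.2
      have hic : d i ≤ c := by
        rw [hc, dif_pos hrm]
        exact hd (Fin.mk_le_mk.mpr (not_lt.mp hi))
      simp only [hu, if_neg hi]
      nlinarith [(ht i).1]
  rw [Fin.sum_castLE_eq_sum_mul_ite hr]
  calc ∑ i, d i * t i = ∑ i, d i * u i + ∑ i, (d i * t i - d i * u i) := by
        rw [Finset.sum_sub_distrib]; ring
    _ ≤ ∑ i, d i * u i + ∑ i, c * (t i - u i) := by gcongr with i; exact key i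
    _ = ∑ i, d i * u i - c * (r - ∑ i, t i) := by
        rw [← Finset.mul_sum, Finset.sum_sub_distrib, hu_sum]; ring
    _ ≤ ∑ i, d i * u i := sub_le_self _ (mul_nonneg hc0 (sub_nonneg.mpr hsum))

theorem Matrix.exists_isStarProjection_mul_eq_self {𝕜 m n : Type*} [RCLike 𝕜]
    [Fintype m] [DecidableEq m] [Fintype n] [DecidableEq n] (C : Matrix m n 𝕜) :
    ∃ Q : Matrix m m 𝕜, IsStarProjection Q ∧ Q * C = C ∧ Q.trace = C.rank := by
  set V := LinearMap.range (toEuclideanLin C)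
  set Q := (toEuclideanCLM (𝕜 := 𝕜) (n := m)).symm V.starProjection
  have hQ : toEuclideanCLM (𝕜 := 𝕜) (n := m) Q = V.starProjection :=
    StarAlgEquiv.apply_symm_apply _ _
  refine ⟨Q, isStarProjection_starProjection.map (toEuclideanCLM (𝕜 := 𝕜) (n := m)).symm, ?_, ?_⟩
  · refine mulVec_injective (funext fun x => ?_)
    rw [← mulVec_mulVec]
    have hx : toLp 2 (C *ᵥ x) ∈ V := ⟨toLp 2 x, rfl⟩
    have := congrArg ofLp (Submodule.starProjection_eq_self_iff.mpr hx)
    rwa [← hQ] at this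
  · have hP : LinearMap.IsProj V (V.starProjection : EuclideanSpace 𝕜 m →ₗ[𝕜] _) :=
      ⟨V.starProjection_apply_mem, fun _ => Submodule.starProjection_eq_self_iff.mpr⟩
    rw [← trace_toLin_eq _ (EuclideanSpace.basisFun m 𝕜).toBasis,
      ← toEuclideanLin_eq_toLin_orthonormal, ← coe_toEuclideanCLM_eq_toEuclideanLin, hQ,
      hP.trace, rank_eq_finrank_range_toLin C (EuclideanSpace.basisFun m 𝕜).toBasis
        (EuclideanSpace.basisFun n 𝕜).toBasis, ← toEuclideanLin_eq_toLin_orthonormal]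

theorem IsStarProjection.star_mul_mul {R : Type*} [Semiring R] [StarRing R] {p u : R}
    (hp : IsStarProjection p) (hu : u * star u = 1) : IsStarProjection (star u * p * u) where
  isIdempotentElem := by
    rw [IsIdempotentElem, show star u * p * u * (star u * p * u)
      = star u * (p * (u * star u) * p) * u by simp only [mul_assoc],
      hu, mul_one, hp.isIdempotentElem.eq, mul_assoc]
  isSelfAdjoint := hp.isSelfAdjoint.conjugate' u

section RealMatrix

variable {m n : Type*} [Fintype m] [Fintype n]

theorem Matrix.trace_mul_transpose_self (M : Matrix m n ℝ) :
    (M * Mᵀ).trace = ∑ i, ∑ j, M i j ^ 2 := by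
  simp [trace, mul_apply, sq]

theorem Matrix.trace_mul_transpose_self_nonneg (M : Matrix m n ℝ) : 0 ≤ (M * Mᵀ).trace := by
  rw [trace_mul_transpose_self]
  positivity

theorem frobNorm_sq (M : Matrix m n ℝ) : frobNorm M ^ 2 = (M * Mᵀ).trace := by
  rw [frobNorm, Real.sq_sqrt (by positivity), trace_mul_transpose_self]

namespace IsStarProjection

variable {Q : Matrix m m ℝ}

theorem transpose_eq (hQ : IsStarProjection Q) : Qᵀ = Q := by
  rw [← conjTranspose_eq_transpose_of_trivial, ← star_eq_conjTranspose, hQ.isSelfAdjoint.star_eq]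

theorem transpose_mul_mul [DecidableEq m] (hQ : IsStarProjection Q) {U : Matrix m m ℝ}
    (hU : Uᵀ * U = 1) : IsStarProjection (Uᵀ * Q * U) := by
  rw [← conjTranspose_eq_transpose_of_trivial, ← star_eq_conjTranspose] at hU ⊢
  exact hQ.star_mul_mul (mul_eq_one_comm.mp hU)

theorem diag_mem_Icc [DecidableEq m] (hQ : IsStarProjection Q) (i : m) :
    Q i i ∈ Set.Icc (0 : ℝ) 1 := by
  have h1 : (1 - Q).PosSemidef := hQ.one_sub_nonneg.posSemidef
  have h2 := h1.diag_nonneg (i := i)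
  simp only [Matrix.sub_apply, one_apply_eq, sub_nonneg] at h2
  exact ⟨hQ.nonneg.posSemidef.diag_nonneg, h2⟩

theorem trace_mul_mul_transpose (hQ : IsStarProjection Q) (M : Matrix m n ℝ) :
    ((Q * M) * (Q * M)ᵀ).trace = (Q * (M * Mᵀ)).trace := by
  rw [transpose_mul, hQ.transpose_eq, show Q * M * (Mᵀ * Q) = Q * (M * Mᵀ) * Q by
    simp only [Matrix.mul_assoc], trace_mul_comm, ← Matrix.mul_assoc, hQ.isIdempotentElem.eq]

theorem trace_one_sub_mul_mul_transpose [DecidableEq m] (hQ : IsStarProjection Q)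
    (M : Matrix m n ℝ) :
    (((1 - Q) * M) * ((1 - Q) * M)ᵀ).trace = (M * Mᵀ).trace - (Q * (M * Mᵀ)).trace := by
  rw [hQ.one_sub.trace_mul_mul_transpose, Matrix.sub_mul, Matrix.one_mul, trace_sub]

theorem trace_sub_le_of_mul_eq_self [DecidableEq m] (hQ : IsStarProjection Q)
    {B C : Matrix m n ℝ} (hC : Q * C = C) :
    (B * Bᵀ).trace - (Q * (B * Bᵀ)).trace ≤ ((B - C) * (B - C)ᵀ).trace := by
  have hkill : (1 - Q) * (B - C) = (1 - Q) * B := by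
    rw [Matrix.mul_sub, Matrix.sub_mul 1 Q C, Matrix.one_mul, hC, sub_self, sub_zero]
  have h := hQ.trace_one_sub_mul_mul_transpose (B - C)
  rw [hkill, hQ.trace_one_sub_mul_mul_transpose] at h
  have h0 := hQ.trace_mul_mul_transpose (B - C) ▸ trace_mul_transpose_self_nonneg (Q * (B - C))
  linarith

end IsStarProjection

end RealMatrix

theorem IsStarProjection.trace_mul_diagonal_le {m r : ℕ} (hr : r ≤ m)
    {Q : Matrix (Fin m) (Fin m) ℝ} (hQ : IsStarProjection Q) (hQr : Q.trace ≤ r)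
    {d : Fin m → ℝ} (hd : Antitone d) (hd0 : ∀ i, 0 ≤ d i) :
    (Q * diagonal d).trace ≤ ∑ j : Fin r, d (Fin.castLE hr j) := by
  have h : (Q * diagonal d).trace = ∑ i, d i * Q i i := by
    simp [trace, mul_diagonal, mul_comm]
  rw [h]
  exact hd.sum_mul_le_sum_castLE hr hd0 hQ.diag_mem_Icc hQr

section Truncation

variable {m ι : Type*} [Fintype m] [DecidableEq ι] {U : Matrix m m ℝ} {e : ι → m}

theorem Matrix.isStarProjection_mul_transpose [Fintype ι] {A : Matrix m ι ℝ}
    (hA : Aᵀ * A = 1) : IsStarProjection (A * Aᵀ) where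
  isIdempotentElem := by
    rw [IsIdempotentElem, Matrix.mul_assoc, ← Matrix.mul_assoc Aᵀ, hA, Matrix.one_mul]
  isSelfAdjoint := by
    rw [IsSelfAdjoint, star_eq_conjTranspose, conjTranspose_eq_transpose_of_trivial,
      transpose_mul, transpose_transpose]

theorem Matrix.transpose_submatrix_mul_submatrix [DecidableEq m] (hU : Uᵀ * U = 1)
    (he : e.Injective) : (U.submatrix id e)ᵀ * U.submatrix id e = 1 := by
  rw [transpose_submatrix, ← submatrix_mul _ _ _ _ _ Function.bijective_id, hU, submatrix_one _ he]

theorem Matrix.trace_submatrix_mul_transpose_mul_conj_diagonal [DecidableEq m] [Fintype ι]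
    (hU : Uᵀ * U = 1) (he : e.Injective) (d : m → ℝ) :
    (U.submatrix id e * (U.submatrix id e)ᵀ * (U * diagonal d * Uᵀ)).trace = ∑ j, d (e j) := by
  have h : (U.submatrix id e)ᵀ * (U * diagonal d * Uᵀ) * U.submatrix id e
      = (Uᵀ * (U * diagonal d * Uᵀ) * U).submatrix e e := by
    rw [submatrix_mul _ _ _ id _ Function.bijective_id,
      submatrix_mul _ _ _ id _ Function.bijective_id, transpose_submatrix, submatrix_id_id]
  rw [Matrix.mul_assoc, trace_mul_comm, h]
  simp only [Matrix.mul_assoc, Matrix.mul_one, ← Matrix.mul_assoc Uᵀ, hU, Matrix.one_mul]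
  rw [submatrix_diagonal _ _ he, trace_diagonal]
  rfl

end Truncation

theorem Matrix.eckart_young {m n r : ℕ} (hr : r ≤ m) {B C : Matrix (Fin m) (Fin n) ℝ}
    {U : Matrix (Fin m) (Fin m) ℝ} (hU : Uᵀ * U = 1) {d : Fin m → ℝ}
    (hB : B * Bᵀ = U * diagonal d * Uᵀ) (hd : Antitone d) (hd0 : ∀ i, 0 ≤ d i)
    {Ur : Matrix (Fin m) (Fin r) ℝ} (hUr : Ur = U.submatrix id (Fin.castLE hr))
    (hC : C.rank ≤ r) :
    ((B - Ur * Urᵀ * B) * (B - Ur * Urᵀ * B)ᵀ).trace ≤ ((B - C) * (B - C)ᵀ).trace := by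
  have hP := isStarProjection_mul_transpose
    (hUr ▸ transpose_submatrix_mul_submatrix hU (Fin.castLE_injective hr))
  have hP_tr : (Ur * Urᵀ * (B * Bᵀ)).trace = ∑ j : Fin r, d (Fin.castLE hr j) := by
    rw [hB, hUr]
    exact trace_submatrix_mul_transpose_mul_conj_diagonal hU (Fin.castLE_injective hr) d
  obtain ⟨Q, hQ, hQC, hQ_tr⟩ := exists_isStarProjection_mul_eq_self C
  have hQ'_tr : (Uᵀ * Q * U).trace ≤ r := by
    rw [Matrix.mul_assoc, trace_mul_comm, Matrix.mul_assoc, mul_eq_one_comm.mp hU, Matrix.mul_one,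
      hQ_tr]
    exact_mod_cast hC
  have hQ_B : (Q * (B * Bᵀ)).trace = (Uᵀ * Q * U * diagonal d).trace := by
    rw [hB, ← Matrix.mul_assoc, trace_mul_comm]
    simp only [Matrix.mul_assoc]
  have hKyFan := (hQ.transpose_mul_mul hU).trace_mul_diagonal_le hr hQ'_tr hd hd0
  rw [show B - Ur * Urᵀ * B = (1 - Ur * Urᵀ) * B by rw [Matrix.sub_mul, Matrix.one_mul],
    hP.trace_one_sub_mul_mul_transpose, hP_tr]
  linarith [hQ.trace_sub_le_of_mul_eq_self (B := B) hQC]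

/-- Let `S` be symmetric positive semidefinite with
`S² = (XXᵀ)^α`. Then `tr((W−W')(XXᵀ)^α(W−W')ᵀ) = ‖(W−W')S‖_F²` for all `W'`,
and `W' = U_r U_rᵀ W` (with `U_r` the first `r` left singular vectors of `WS`)
minimizes the left-hand side over matrices of rank at most `r`. -/
theorem stmt10 {m n k : ℕ} (r α : ℕ) (hr : r ≤ m)
    (W : Matrix (Fin m) (Fin n) ℝ) (X : Matrix (Fin n) (Fin k) ℝ)
    (S : Matrix (Fin n) (Fin n) ℝ) (hS : S.PosSemidef)
    (hS2 : S * S = (X * Xᵀ) ^ α)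
    (U : Matrix (Fin m) (Fin m) ℝ) (s : Fin m → ℝ)
    (hU : Uᵀ * U = 1)
    (hsvd : (W * S) * (W * S)ᵀ = U * Matrix.diagonal (fun i => (s i) ^ 2) * Uᵀ)
    (hmono : Antitone s) (hpos : ∀ i, 0 ≤ s i)
    (Ur : Matrix (Fin m) (Fin r) ℝ)
    (hUr : Ur = U.submatrix id (Fin.castLE hr)) :
    (∀ W' : Matrix (Fin m) (Fin n) ℝ,
        Matrix.trace ((W - W') * (X * Xᵀ) ^ α * (W - W')ᵀ) =
          frobNorm ((W - W') * S) ^ 2) ∧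
    (Ur * Urᵀ * W).rank ≤ r ∧
      ∀ W' : Matrix (Fin m) (Fin n) ℝ, W'.rank ≤ r →
        Matrix.trace ((W - Ur * Urᵀ * W) * (X * Xᵀ) ^ α * (W - Ur * Urᵀ * W)ᵀ) ≤
          Matrix.trace ((W - W') * (X * Xᵀ) ^ α * (W - W')ᵀ) := by
  have hSt : Sᵀ = S := by
    rw [← conjTranspose_eq_transpose_of_trivial]
    exact hS.isHermitian
  have hgram (A : Matrix (Fin m) (Fin n) ℝ) : A * (X * Xᵀ) ^ α * Aᵀ = (A * S) * (A * S)ᵀ := by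
    rw [← hS2, transpose_mul, hSt]
    simp only [Matrix.mul_assoc]
  refine ⟨fun W' => by rw [hgram, frobNorm_sq], ?_, fun W' hW' => ?_⟩
  · calc (Ur * Urᵀ * W).rank ≤ Ur.rank :=
          (rank_mul_le_left _ _).trans (rank_mul_le_left _ _)
      _ ≤ r := by simpa using Ur.rank_le_card_width
  · rw [hgram, hgram, Matrix.sub_mul W, Matrix.sub_mul W W', Matrix.mul_assoc (Ur * Urᵀ) W S]
    exact eckart_young hr hU hsvd (fun i j h => pow_le_pow_left₀ (hpos j) (hmono h) 2)
      (fun i => sq_nonneg _) hUr ((rank_mul_le_left _ _).trans hW')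
end
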